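/- arXiv:math/0404110 — 5 statements merged into one kernel-verified Lean document; each statement's English description precedes it below -/
import Mathlib

section
/- Let U be a vector space, let H₁ ∈ U((x))((x₁))((x₂)) and H₂ ∈ U((x))((x₂))((x₁)). If there exists a nonzero polynomial f(x₁,x₂) with f(x₁,x₁) ≠ 0 such that f(x₁+x, x₂+x)H₁ = f(x₁+x, x₂+x)H₂ (as elements of U[[x^{±1},x₁^{±1},x₂^{±1}]]), then H₁ = H₂. -/
/-- Action of a polynomial in three variables (variables `0 ↦ x`, `1 ↦ x₁`, `2 ↦ x₂`)
on a formal series `H ∈ U[[x^{±1},x₁^{±1},x₂^{±1}]]`, modeled as a coefficient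
function `H : ℤ → ℤ → ℤ → U` (`H i j k` = coefficient of `x^i x₁^j x₂^k`). -/
noncomputable def polyAct3 {U : Type*} [AddCommGroup U] [Module ℂ U]
    (p : MvPolynomial (Fin 3) ℂ) (H : ℤ → ℤ → ℤ → U) : ℤ → ℤ → ℤ → U :=
  fun a b c => ∑ m ∈ p.support,
    MvPolynomial.coeff m p • H (a - (m 0 : ℤ)) (b - (m 1 : ℤ)) (c - (m 2 : ℤ))

/-- A nonzero one-variable polynomial acts injectively on lower-truncated
series `ℤ → U`. -/
private lemma onevar_aux {U : Type*} [AddCommGroup U] [Module ℂ U]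
    (p : Polynomial ℂ) (hp : p ≠ 0) (s : ℤ → U)
    (hs : ∃ N : ℤ, ∀ i < N, s i = 0)
    (heq : ∀ a : ℤ, ∑ l ∈ p.support, p.coeff l • s (a - (l : ℤ)) = 0) :
    ∀ i, s i = 0 := by
  by_contra hcon
  push_neg at hcon
  obtain ⟨N, hN⟩ := hs
  obtain ⟨a₀, ha₀, hmin⟩ := Int.exists_least_of_bdd (P := fun i => s i ≠ 0)
    ⟨N, fun z hz => le_of_not_gt fun hlt => hz (hN z hlt)⟩ hcon
  have hmem : p.natTrailingDegree ∈ p.support :=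
    Polynomial.natTrailingDegree_mem_support_of_nonzero hp
  have hd : p.coeff p.natTrailingDegree ≠ 0 := Polynomial.mem_support_iff.mp hmem
  have hkey := heq (a₀ + p.natTrailingDegree)
  rw [Finset.sum_eq_single_of_mem p.natTrailingDegree hmem] at hkey
  · have : p.coeff p.natTrailingDegree • s a₀ = 0 := by simpa using hkey
    rcases smul_eq_zero.mp this with h | h
    · exact hd h
    · exact ha₀ h
  · intro l hl hne
    have hdl : p.natTrailingDegree ≤ l :=
      Polynomial.natTrailingDegree_le_of_ne_zero (Polynomial.mem_support_iff.mp hl)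
    have hdl' : (p.natTrailingDegree : ℤ) < l := by
      have : p.natTrailingDegree < l := lt_of_le_of_ne hdl (Ne.symm hne)
      exact_mod_cast this
    have hz : s (a₀ + p.natTrailingDegree - l) = 0 := by
      by_contra hssz
      have := hmin _ hssz
      omega
    rw [hz, smul_zero]

/-- Let `H₁ ∈ U((x))((x₁))((x₂))` and `H₂ ∈ U((x))((x₂))((x₁))`
(expressed by lower-truncation conditions on the coefficient functions).  If
`f(x₁,x₂)` is a nonzero polynomial with `f(x₁,x₁) ≠ 0` and
`f(x₁+x, x₂+x) H₁ = f(x₁+x, x₂+x) H₂`, then `H₁ = H₂`.  Here `f(x₁+x,x₂+x)` is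
the polynomial in the three variables `x, x₁, x₂` obtained by substitution. -/
theorem stmt_3 (U : Type*) [AddCommGroup U] [Module ℂ U]
    (H₁ H₂ : ℤ → ℤ → ℤ → U)
    -- `H₁ ∈ U((x))((x₁))((x₂))`:
    (h₁a : ∃ N : ℤ, ∀ k < N, ∀ i j, H₁ i j k = 0)
    (h₁b : ∀ k : ℤ, ∃ N : ℤ, ∀ j < N, ∀ i, H₁ i j k = 0)
    (h₁c : ∀ k j : ℤ, ∃ N : ℤ, ∀ i < N, H₁ i j k = 0)
    -- `H₂ ∈ U((x))((x₂))((x₁))`: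
    (h₂a : ∃ N : ℤ, ∀ j < N, ∀ i k, H₂ i j k = 0)
    (h₂b : ∀ j : ℤ, ∃ N : ℤ, ∀ k < N, ∀ i, H₂ i j k = 0)
    (h₂c : ∀ j k : ℤ, ∃ N : ℤ, ∀ i < N, H₂ i j k = 0)
    (f : MvPolynomial (Fin 2) ℂ) (hf : f ≠ 0)
    (hfdiag : MvPolynomial.eval₂ Polynomial.C (fun _ => Polynomial.X) f ≠ 0)
    (h : polyAct3 (MvPolynomial.eval₂ MvPolynomial.C
            (fun i => MvPolynomial.X i.succ + MvPolynomial.X 0) f) H₁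
          = polyAct3 (MvPolynomial.eval₂ MvPolynomial.C
            (fun i => MvPolynomial.X i.succ + MvPolynomial.X 0) f) H₂) :
    H₁ = H₂ := by
  classical
  set g : MvPolynomial (Fin 3) ℂ := MvPolynomial.eval₂ MvPolynomial.C
      (fun i => MvPolynomial.X i.succ + MvPolynomial.X 0) f with hgdef
  set D : ℤ → ℤ → ℤ → U := fun i j k => H₁ i j k - H₂ i j k with hDdef
  have hD : ∀ a b c : ℤ,
      ∑ μ ∈ g.support, MvPolynomial.coeff μ g •
        D (a - (μ 0 : ℤ)) (b - (μ 1 : ℤ)) (c - (μ 2 : ℤ)) = 0 := by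
    intro a b c
    have h' := congrFun (congrFun (congrFun h a) b) c
    simp only [polyAct3] at h'
    simp only [hDdef, smul_sub, Finset.sum_sub_distrib]
    rw [sub_eq_zero]
    exact h'
  set v : Fin 3 → Polynomial ℂ := fun i => if i = 0 then Polynomial.X else 0 with hvdef
  set p0 : Polynomial ℂ := MvPolynomial.aeval v g with hp0def
  have hp0 : p0 ≠ 0 := by
    set w : Fin 2 → MvPolynomial (Fin 3) ℂ :=
      fun i => MvPolynomial.X i.succ + MvPolynomial.X 0 with hwdef
    have h1 : g = MvPolynomial.aeval w f := by
      rw [hgdef, MvPolynomial.aeval_def, MvPolynomial.algebraMap_eq]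
    have h2 : p0 = MvPolynomial.aeval (fun i : Fin 2 => (MvPolynomial.aeval v) (w i)) f := by
      rw [hp0def, h1, ← MvPolynomial.comp_aeval, AlgHom.comp_apply]
    have h3 : (fun i : Fin 2 => (MvPolynomial.aeval v) (w i)) = fun _ => Polynomial.X := by
      funext i
      simp [hwdef, hvdef, Fin.succ_ne_zero]
    rw [h2, h3]
    intro hzero
    apply hfdiag
    rw [MvPolynomial.aeval_def, Polynomial.algebraMap_eq] at hzero
    exact hzero
  have cId : ∀ l : ℕ, p0.coeff l = MvPolynomial.coeff (Finsupp.single 0 l) g := by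
    intro l
    have hrep : p0 = ∑ μ ∈ g.support,
        Polynomial.C (MvPolynomial.coeff μ g) * ∏ i : Fin 3, v i ^ μ i := by
      rw [hp0def, MvPolynomial.aeval_def, MvPolynomial.eval₂_eq', Polynomial.algebraMap_eq]
    rw [hrep, Polynomial.finset_sum_coeff]
    have hterm : ∀ μ ∈ g.support,
        (Polynomial.C (MvPolynomial.coeff μ g) * ∏ i : Fin 3, v i ^ μ i).coeff l
          = if μ = Finsupp.single 0 l then MvPolynomial.coeff μ g else 0 := by
      intro μ _
      rw [Fin.prod_univ_three]
      have hv0 : v 0 = Polynomial.X := by simp [hvdef]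
      have hv1 : v 1 = 0 := by simp [hvdef]
      have hv2 : v 2 = 0 := by simp [hvdef]
      rw [hv0, hv1, hv2]
      by_cases h1 : μ 1 = 0
      · by_cases h2 : μ 2 = 0
        · rw [h1, h2]
          simp only [pow_zero, mul_one, Polynomial.coeff_C_mul, Polynomial.coeff_X_pow]
          have hiff : μ = Finsupp.single 0 l ↔ l = μ 0 := by
            constructor
            · intro he; rw [he]; simp [Finsupp.single_apply]
            · intro he
              ext i
              fin_cases i <;> simp [Finsupp.single_apply, h1, h2, he]
          rw [if_congr hiff.symm rfl rfl]
          split <;> simp_all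
        · rw [if_neg (by intro he; apply h2; rw [he]; simp [Finsupp.single_apply])]
          rw [zero_pow h2]
          simp
      · rw [if_neg (by intro he; apply h1; rw [he]; simp [Finsupp.single_apply])]
        rw [zero_pow h1]
        simp
    rw [Finset.sum_congr rfl hterm, Finset.sum_ite_eq' g.support (Finsupp.single 0 l)]
    split
    · rfl
    · exact (MvPolynomial.notMem_support_iff.mp (by assumption)).symm
  funext i₀ j₀ k₀
  obtain ⟨N₀, hN₀⟩ := h₁a
  obtain ⟨M₀, hM₀⟩ := h₂a
  choose Nf hNf using h₂b
  choose Mf hMf using h₁b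
  set Ks : Finset ℤ := insert N₀ ((Finset.Icc M₀ j₀).image Nf) with hKs
  set K : ℤ := Ks.min' (Finset.insert_nonempty _ _) with hKdef
  have hK : ∀ k' < K, ∀ j' ≤ j₀, ∀ i', D i' j' k' = 0 := by
    intro k' hk' j' hj' i'
    have hKN₀ : K ≤ N₀ := Finset.min'_le _ _ (Finset.mem_insert_self _ _)
    have hH₁ : H₁ i' j' k' = 0 := hN₀ k' (lt_of_lt_of_le hk' hKN₀) i' j'
    have hH₂ : H₂ i' j' k' = 0 := by
      rcases lt_or_ge j' M₀ with hlt | hge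
      · exact hM₀ j' hlt i' k'
      · have hmem : Nf j' ∈ Ks := Finset.mem_insert_of_mem
          (Finset.mem_image_of_mem _ (Finset.mem_Icc.mpr ⟨hge, hj'⟩))
        exact hNf j' k' (lt_of_lt_of_le hk' (Finset.min'_le _ _ hmem)) i'
    simp [hDdef, hH₁, hH₂]
  set Js : Finset ℤ := insert M₀ ((Finset.Icc N₀ k₀).image Mf) with hJs
  set J : ℤ := Js.min' (Finset.insert_nonempty _ _) with hJdef
  have hJ : ∀ j' < J, ∀ k' ≤ k₀, ∀ i', D i' j' k' = 0 := by
    intro j' hj' k' hk' i'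
    have hJM₀ : J ≤ M₀ := Finset.min'_le _ _ (Finset.mem_insert_self _ _)
    have hH₂ : H₂ i' j' k' = 0 := hM₀ j' (lt_of_lt_of_le hj' hJM₀) i' k'
    have hH₁ : H₁ i' j' k' = 0 := by
      rcases lt_or_ge k' N₀ with hlt | hge
      · exact hN₀ k' hlt i' j'
      · have hmem : Mf k' ∈ Js := Finset.mem_insert_of_mem
          (Finset.mem_image_of_mem _ (Finset.mem_Icc.mpr ⟨hge, hk'⟩))
        exact hMf k' j' (lt_of_lt_of_le hj' (Finset.min'_le _ _ hmem)) i'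
    simp [hDdef, hH₁, hH₂]
  have main : ∀ n : ℕ, ∀ j k : ℤ, j ≤ j₀ → k ≤ k₀ → j + k < J + K + n →
      ∀ i, D i j k = 0 := by
    intro n
    induction n with
    | zero =>
      intro j k hj hk hsum i
      rcases lt_or_ge j J with hjJ | hjJ
      · exact hJ j hjJ k hk i
      · have hkK : k < K := by omega
        exact hK k hkK j hj i
    | succ n ih =>
      intro j k hj hk hsum i
      rcases lt_or_ge j J with hjJ | hjJ
      · exact hJ j hjJ k hk i
      rcases lt_or_ge k K with hkK | hkK
      · exact hK k hkK j hj i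
      have hbelow : ∃ N : ℤ, ∀ i' < N, D i' j k = 0 := by
        obtain ⟨N₁, hN₁⟩ := h₁c k j
        obtain ⟨N₂, hN₂⟩ := h₂c j k
        refine ⟨min N₁ N₂, fun i' hi' => ?_⟩
        have e1 := hN₁ i' (lt_of_lt_of_le hi' (min_le_left _ _))
        have e2 := hN₂ i' (lt_of_lt_of_le hi' (min_le_right _ _))
        simp [hDdef, e1, e2]
      have heq : ∀ a : ℤ, ∑ l ∈ p0.support, p0.coeff l • D (a - (l : ℤ)) j k = 0 := by
        intro a
        have h0 := hD a j k
        rw [← Finset.sum_filter_add_sum_filter_not g.support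
            (fun μ => μ 1 = 0 ∧ μ 2 = 0)] at h0
        have hrest : ∑ μ ∈ g.support.filter (fun μ => ¬(μ 1 = 0 ∧ μ 2 = 0)),
            MvPolynomial.coeff μ g •
              D (a - (μ 0 : ℤ)) (j - (μ 1 : ℤ)) (k - (μ 2 : ℤ)) = 0 := by
          apply Finset.sum_eq_zero
          intro μ hμ
          have hμ' := (Finset.mem_filter.mp hμ).2
          have hz : D (a - (μ 0 : ℤ)) (j - (μ 1 : ℤ)) (k - (μ 2 : ℤ)) = 0 :=
            ih (j - (μ 1 : ℤ)) (k - (μ 2 : ℤ)) (by omega) (by omega) (by omega) _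
          rw [hz, smul_zero]
        rw [hrest, add_zero] at h0
        rw [← h0]
        refine Finset.sum_bij' (fun (l : ℕ) _ => Finsupp.single (0 : Fin 3) l)
          (fun μ _ => μ 0) ?_ ?_ ?_ ?_ ?_
        · intro l hl
          refine Finset.mem_filter.mpr ⟨?_, ?_⟩
          · rw [MvPolynomial.mem_support_iff, ← cId l]
            exact Polynomial.mem_support_iff.mp hl
          · constructor <;> simp [Finsupp.single_apply]
        · intro μ hμ
          have hmf := Finset.mem_filter.mp hμ
          have hμs := hmf.1
          have hμ1 := hmf.2.1
          have hμ2 := hmf.2.2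
          have hμeq : Finsupp.single (0 : Fin 3) (μ 0) = μ := by
            ext i
            fin_cases i <;> simp [Finsupp.single_apply, hμ1, hμ2]
          rw [Polynomial.mem_support_iff, cId, hμeq]
          exact MvPolynomial.mem_support_iff.mp hμs
        · intro l hl
          simp
        · intro μ hμ
          have hmf := Finset.mem_filter.mp hμ
          have hμs := hmf.1
          have hμ1 := hmf.2.1
          have hμ2 := hmf.2.2
          ext i
          fin_cases i <;> simp [Finsupp.single_apply, hμ1, hμ2]
        · intro l hl
          rw [cId l]
          simp [Finsupp.single_apply]
      exact onevar_aux p0 hp0 (fun i' => D i' j k) hbelow heq i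
  have hfin : D i₀ j₀ k₀ = 0 := by
    refine main (j₀ + k₀ - (J + K) + 1).toNat j₀ k₀ le_rfl le_rfl ?_ i₀
    have := Int.self_le_toNat (j₀ + k₀ - (J + K) + 1)
    omega
  have : H₁ i₀ j₀ k₀ - H₂ i₀ j₀ k₀ = 0 := hfin
  exact sub_eq_zero.mp this
end

section
/- For any nonzero complex number α, the delta-function identity x₀^{−1}δ((x₁−αx₂)/x₀) − x₀^{−1}δ((−αx₂+x₁)/x₀) = x₁^{−1}δ((αx₂+x₀)/x₁) holds in ℂ[[x₀^{±1},x₁^{±1},x₂^{±1}]]. -/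
/-- Generalized binomial coefficient `binom(n, i) = n(n-1)⋯(n-i+1)/i!` for `n : ℤ`. -/
noncomputable def genBinom (n : ℤ) (i : ℕ) : ℂ :=
  (∏ j ∈ Finset.range i, ((n : ℂ) - j)) / (Nat.factorial i : ℂ)


lemma prod_cast (n : ℕ) : ∀ i : ℕ, (∏ j ∈ Finset.range i, (((n:ℤ) : ℂ) - j)) = (n.descFactorial i : ℂ)
  | 0 => by simp
  | (i+1) => by
    rw [Finset.prod_range_succ, prod_cast n i, Nat.descFactorial_succ]
    rcases le_or_gt (i+1) n with h | h
    · push_cast [Nat.cast_sub (le_of_lt h)]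
      ring
    · have h' : n ≤ i := by omega
      rcases h'.lt_or_eq with h2 | h2
      · simp [Nat.descFactorial_of_lt h2]
      · subst h2; simp

lemma genBinom_natCast (n i : ℕ) : genBinom (n : ℤ) i = (n.choose i : ℂ) := by
  rw [genBinom, prod_cast, Nat.descFactorial_eq_factorial_mul_choose]
  push_cast
  rw [mul_comm, mul_div_assoc]
  rw [div_self (by exact_mod_cast Nat.factorial_ne_zero i), mul_one]

lemma genBinom_reflect (n : ℤ) (i : ℕ) :
    genBinom n i = (-1 : ℂ)^i * genBinom ((i : ℤ) - 1 - n) i := by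
  unfold genBinom
  rw [← mul_div_assoc]
  congr 1
  rw [← Finset.prod_range_reflect (fun j => ((n : ℂ) - j)) i]
  have hpow : (-1 : ℂ)^i = ∏ _j ∈ Finset.range i, (-1 : ℂ) := by simp
  rw [hpow, ← Finset.prod_mul_distrib]
  apply Finset.prod_congr rfl
  intro j hj
  have hji : j < i := Finset.mem_range.mp hj
  have : ((i - 1 - j : ℕ) : ℂ) = (i : ℂ) - 1 - j := by
    push_cast [Nat.cast_sub (by omega : j ≤ i - 1), Nat.cast_sub (by omega : 1 ≤ i)]
    ring
  rw [this]
  push_cast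
  ring

lemma genBinom_neg (n i : ℕ) :
    genBinom (-(n:ℤ) - 1) i = (-1 : ℂ)^i * ((n + i).choose i : ℂ) := by
  rw [genBinom_reflect]
  congr 1
  have : ((i : ℤ) - 1 - (-(n:ℤ) - 1)) = ((n + i : ℕ) : ℤ) := by push_cast; ring
  rw [this, genBinom_natCast]

/-- the delta-function identity
`x₀⁻¹δ((x₁−αx₂)/x₀) − x₀⁻¹δ((−αx₂+x₁)/x₀) = x₁⁻¹δ((αx₂+x₀)/x₁)`
in `ℂ[[x₀^{±1},x₁^{±1},x₂^{±1}]]`, stated coefficientwise: `a, b, c` are the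
exponents of `x₀, x₁, x₂`.  By the binomial expansion conventions (negative
powers of a binomial are expanded in nonnegative powers of the second listed
variable):
* `x₀⁻¹δ((x₁−αx₂)/x₀)` has coefficient `binom(−a−1, c)·(−α)^c` when `c ≥ 0` and
  `a+b+c = −1` (and `0` otherwise);
* `x₀⁻¹δ((−αx₂+x₁)/x₀)` has coefficient `binom(−a−1, b)·(−α)^c` when `b ≥ 0` and
  `a+b+c = −1`;
* `x₁⁻¹δ((αx₂+x₀)/x₁)` has coefficient `binom(−b−1, a)·α^c` when `a ≥ 0` and
  `a+b+c = −1`. -/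
theorem stmt_4 (α : ℂ) (hα : α ≠ 0) (a b c : ℤ) :
    ((if 0 ≤ c ∧ a + b + c = -1 then genBinom (-a - 1) c.toNat * (-α) ^ c.toNat else 0)
      - (if 0 ≤ b ∧ a + b + c = -1 then genBinom (-a - 1) b.toNat * (-α) ^ c else 0))
    = (if 0 ≤ a ∧ a + b + c = -1 then genBinom (-b - 1) a.toNat * α ^ c else 0) := by
  by_cases hsum : a + b + c = -1
  · simp only [hsum, eq_self_iff_true, and_true]
    by_cases hc : 0 ≤ c <;> by_cases hb : 0 ≤ b <;> by_cases ha : 0 ≤ a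
    · omega
    · -- c ≥ 0, b ≥ 0, a < 0
      rw [if_pos hc, if_pos hb, if_neg ha]
      have h1 : -a - 1 = ((c.toNat + b.toNat : ℕ) : ℤ) := by omega
      have h2 : (-α) ^ c = (-α) ^ c.toNat := by
        rw [← zpow_natCast, Int.toNat_of_nonneg hc]
      rw [h1, h2, genBinom_natCast, genBinom_natCast, Nat.choose_symm_add, sub_self]
    · -- c ≥ 0, b < 0, a ≥ 0
      rw [if_pos hc, if_neg hb, if_pos ha]
      have h1 : -a - 1 = -(a.toNat : ℤ) - 1 := by omega
      have h2 : -b - 1 = ((a.toNat + c.toNat : ℕ) : ℤ) := by omega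
      have h3 : α ^ c = α ^ c.toNat := by
        rw [← zpow_natCast, Int.toNat_of_nonneg hc]
      rw [h1, h2, genBinom_neg, genBinom_natCast, h3, Nat.choose_symm_add, neg_pow, sub_zero]
      have hone : ((-1 : ℂ)) ^ c.toNat * (-1) ^ c.toNat = 1 := by
        rw [← mul_pow]; norm_num
      linear_combination (((a.toNat + c.toNat).choose c.toNat : ℂ) * α ^ c.toNat) * hone
    · -- c ≥ 0, b < 0, a < 0
      rw [if_neg hb, if_neg ha]
      have h1 : -a - 1 = (((-a - 1).toNat : ℕ) : ℤ) := by omega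
      rw [if_pos hc, h1, genBinom_natCast, Nat.choose_eq_zero_of_lt (by omega)]
      simp
    · -- c < 0, b ≥ 0, a ≥ 0
      rw [if_neg hc, if_pos hb, if_pos ha]
      have h1 : -a - 1 = -(a.toNat : ℤ) - 1 := by omega
      have h2 : -b - 1 = -(b.toNat : ℤ) - 1 := by omega
      rw [h1, h2, genBinom_neg, genBinom_neg]
      obtain ⟨m, hm⟩ : ∃ m : ℕ, c = -(m : ℤ) ∧ m = a.toNat + b.toNat + 1 :=
        ⟨(-c).toNat, by omega, by omega⟩
      have hneg : (-α) ^ c = (-1 : ℂ) ^ (a.toNat + b.toNat + 1) * α ^ c := by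
        have : (-α) ^ c = (-1 : ℂ) ^ c * α ^ c := by
          rw [← mul_zpow]; norm_num
        rw [this, hm.1, hm.2]
        congr 1
        rw [zpow_neg, zpow_natCast, ← inv_pow, inv_neg, inv_one]
      rw [hneg]
      have hch : (a.toNat + b.toNat).choose b.toNat = (b.toNat + a.toNat).choose a.toNat := by
        rw [Nat.add_comm b.toNat a.toNat, Nat.choose_symm_add]
      rw [hch]
      have hone : ((-1 : ℂ)) ^ b.toNat * (-1) ^ b.toNat = 1 := by
        rw [← mul_pow]; norm_num
      linear_combination (((b.toNat + a.toNat).choose a.toNat : ℂ) * α ^ c * (-1) ^ a.toNat) * hone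
    · -- c < 0, b ≥ 0, a < 0
      rw [if_neg hc, if_pos hb, if_neg ha]
      have h1 : -a - 1 = (((-a - 1).toNat : ℕ) : ℤ) := by omega
      rw [h1, genBinom_natCast, Nat.choose_eq_zero_of_lt (by omega)]
      simp
    · -- c < 0, b < 0, a ≥ 0
      rw [if_neg hc, if_neg hb, if_pos ha]
      have h2 : -b - 1 = (((-b - 1).toNat : ℕ) : ℤ) := by omega
      rw [h2, genBinom_natCast, Nat.choose_eq_zero_of_lt (by omega)]
      simp
    · rw [if_neg hc, if_neg hb, if_neg ha]; simp
  · simp [hsum]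
end

section
/- Let U be a vector space, A(x₁,x₂) ∈ U[[x₁^{±1},x₂^{±1}]], and let p(x) be a nonzero polynomial with p(0) ≠ 0, with distinct roots α₁,…,α_r of multiplicities k₁,…,k_r. Then p(x₁/x₂)A(x₁,x₂) = 0 if and only if A(x₁,x₂) = Σ_{i=1}^r Σ_{j=0}^{k_i−1} ((α_i^{−j}/j!)(∂/∂x₂)^j x₁^{−1}δ(α_i x₂/x₁)) B_{i,j}(x₂) for some B_{i,j}(x) ∈ U[[x,x^{−1}]]; moreover the B_{i,j} are uniquely determined by A. -/
/-- Coefficient function of `x₁⁻¹δ(βx₂/x₁) = Σ_{k∈ℤ} β^k x₂^k x₁^{−k−1}`. -/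
noncomputable def deltaTwo (β : ℂ) : ℤ → ℤ → ℂ :=
  fun i j => if i + j = -1 then β ^ j else 0

/-- The formal partial derivative `∂/∂x₂` on `ℂ[[x₁^{±1},x₂^{±1}]]`. -/
noncomputable def derX2 (F : ℤ → ℤ → ℂ) : ℤ → ℤ → ℂ :=
  fun i j => ((j : ℂ) + 1) * F i (j + 1)

/-- Multiplication of `A ∈ U[[x₁^{±1},x₂^{±1}]]` by the Laurent polynomial
`p(x₁/x₂) = Σ_s p_s x₁^s x₂^{−s}`. -/
noncomputable def polyLaurentAct {U : Type*} [AddCommGroup U] [Module ℂ U]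
    (p : Polynomial ℂ) (A : ℤ → ℤ → U) : ℤ → ℤ → U :=
  fun a b => ∑ s ∈ Finset.range (p.natDegree + 1), p.coeff s • A (a - s) (b + s)

/-- The product `((∂/∂x₂)^j x₁⁻¹δ(βx₂/x₁)) · B(x₂)` for a `U`-valued one-variable
series `B` (the sum over splittings of the `x₂`-exponent is finite). -/
noncomputable def deltaTerm {U : Type*} [AddCommGroup U] [Module ℂ U]
    (β : ℂ) (j : ℕ) (B : ℤ → U) : ℤ → ℤ → U :=
  fun a b => ∑ᶠ k : ℤ, (derX2^[j] (deltaTwo β)) a (b - k) • B k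

/-!
Multiplication by `p(x₁/x₂)` preserves the total degree `a + b`, and on the antidiagonal
`a ↦ A(a, n - a)` it acts as `p(S)` for the shift `(S f)(a) = f(a - 1)`. So the theorem describes
the solutions of the linear recurrence with characteristic polynomial `p`. The factors
`(X - αᵢ)^kᵢ` are pairwise coprime, so `ker p(S)` is the direct sum of the `ker (S - αᵢ)^kᵢ`, and
each of these has the Jordan basis `a ↦ binom(-a-1, j) αᵢ^(-a-1-j)`, `j < kᵢ`: `S - α` sends the
`(j+1)`-st sequence to the `j`-th and kills the `0`-th, whose multiples are all of `ker (S - α)`.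
With the normalisation `α^(-j)/j!`, these sequences are exactly the antidiagonal coefficients of
`(∂/∂x₂)^j x₁⁻¹δ(αx₂/x₁)`.
-/

open Polynomial Function

section JordanChain

variable {R U V : Type*} [CommRing R] [AddCommGroup U] [Module R U] [AddCommGroup V] [Module R V]

/-- `E j u` is the `j`-th vector of a Jordan chain of `T` for the eigenvalue `0`, parametrised
linearly by `u`; the chain starts from an arbitrary vector of `ker T`, which `E 0` identifies
with `U`. -/
structure IsJordanChain (T : Module.End R V) (E : ℕ → U →ₗ[R] V) : Prop where
  map_succ : ∀ j u, T (E (j + 1) u) = E j u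
  ker_eq_range : LinearMap.ker T = LinearMap.range (E 0)
  injective_zero : Injective (E 0)

namespace IsJordanChain

variable {T : Module.End R V} {E : ℕ → U →ₗ[R] V}

lemma map_zero_apply (h : IsJordanChain T E) (u : U) : T (E 0 u) = 0 := by
  rw [← LinearMap.mem_ker, h.ker_eq_range]
  exact LinearMap.mem_range_self _ u

lemma pow_apply_add (h : IsJordanChain T E) (i j : ℕ) (u : U) : (T ^ i) (E (j + i) u) = E j u := by
  induction i with
  | zero => simp
  | succ i ih => rw [pow_succ, Module.End.mul_apply, ← add_assoc, h.map_succ, ih]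

lemma pow_apply_of_lt (h : IsJordanChain T E) {j k : ℕ} (hjk : j < k) (u : U) :
    (T ^ k) (E j u) = 0 := by
  obtain ⟨m, rfl⟩ := Nat.exists_eq_add_of_lt hjk
  have hj : (T ^ j) (E j u) = E 0 u := by simpa using h.pow_apply_add j 0 u
  rw [show j + m + 1 = m + (j + 1) by omega, pow_add, pow_succ', Module.End.mul_apply,
    Module.End.mul_apply, hj, h.map_zero_apply, map_zero]

lemma mem_ker_pow_iff (h : IsJordanChain T E) {k : ℕ} {v : V} :
    v ∈ LinearMap.ker (T ^ k) ↔ ∃ c : Fin k → U, v = ∑ j : Fin k, E j (c j) := by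
  refine ⟨fun hv => ?_, ?_⟩
  · induction k generalizing v with
    | zero => exact ⟨Fin.elim0, by simpa using hv⟩
    | succ k ih =>
      rw [LinearMap.mem_ker, pow_succ, Module.End.mul_apply, ← LinearMap.mem_ker] at hv
      obtain ⟨c, hc⟩ := ih hv
      have hrest : v - ∑ j : Fin k, E (j + 1) (c j) ∈ LinearMap.ker T := by
        simp [map_sum, h.map_succ, hc]
      rw [h.ker_eq_range] at hrest
      obtain ⟨c₀, hc₀⟩ := hrest
      exact ⟨Fin.cons c₀ c, by simp [Fin.sum_univ_succ, hc₀]⟩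
  · rintro ⟨c, rfl⟩
    simp [map_sum, h.pow_apply_of_lt]

lemma sum_eq_zero_iff (h : IsJordanChain T E) {k : ℕ} {c : Fin k → U} :
    ∑ j : Fin k, E j (c j) = 0 ↔ c = 0 := by
  refine ⟨fun hc => ?_, by rintro rfl; simp⟩
  induction k with
  | zero => exact Subsingleton.elim _ _
  | succ k ih =>
    rw [Fin.sum_univ_castSucc] at hc
    have hlast : c (Fin.last k) = 0 := by
      have := congrArg (T ^ k) hc
      simp only [map_add, map_sum, Fin.val_castSucc, h.pow_apply_of_lt (Fin.is_lt _),
        Finset.sum_const_zero, zero_add, Fin.val_last, map_zero] at this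
      rw [show (T ^ k) (E k (c (Fin.last k))) = E 0 (c (Fin.last k)) by
        simpa using h.pow_apply_add k 0 (c (Fin.last k))] at this
      exact h.injective_zero (this.trans (map_zero _).symm)
    rw [hlast, map_zero, add_zero] at hc
    have hinit := ih hc
    funext j
    induction j using Fin.lastCases with
    | last => exact hlast
    | cast j => exact congrFun hinit j

lemma sum_injective (h : IsJordanChain T E) (k : ℕ) :
    Injective fun c : Fin k → U => ∑ j : Fin k, E j (c j) := by
  intro c c' hcc'
  rw [← sub_eq_zero, ← h.sum_eq_zero_iff]
  simpa [map_sub, Finset.sum_sub_distrib, sub_eq_zero] using hcc'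

lemma mem_ker_aeval_X_sub_C_pow_iff {f : Module.End R V} {μ : R}
    (h : IsJordanChain (aeval f (X - C μ)) E) {n : ℕ} {v : V} :
    v ∈ LinearMap.ker (aeval f ((X - C μ) ^ n)) ↔ ∃ c : Fin n → U, v = ∑ j : Fin n, E j (c j) := by
  rw [map_pow, h.mem_ker_pow_iff]

end IsJordanChain

end JordanChain

namespace Polynomial

variable {R M : Type*} [CommRing R] [AddCommGroup M] [Module R M] (T : Module.End R M)

lemma ker_aeval_le_of_dvd {p q : R[X]} (hpq : p ∣ q) :
    LinearMap.ker (aeval T p) ≤ LinearMap.ker (aeval T q) := by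
  obtain ⟨r, rfl⟩ := hpq
  intro v hv
  rw [LinearMap.mem_ker] at hv ⊢
  rw [mul_comm, map_mul, Module.End.mul_apply, hv, map_zero]

lemma ker_aeval_prod_of_pairwise_isCoprime {ι : Type*} (s : Finset ι) {q : ι → R[X]}
    (hq : (s : Set ι).Pairwise (IsCoprime on q)) :
    LinearMap.ker (aeval T (∏ i ∈ s, q i)) = ⨆ i ∈ s, LinearMap.ker (aeval T (q i)) := by
  classical
  induction s using Finset.induction_on with
  | empty => simp [Module.End.one_eq_id]
  | insert a s has ih =>
    rw [Finset.coe_insert, Set.pairwise_insert] at hq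
    have hcop : IsCoprime (q a) (∏ i ∈ s, q i) :=
      IsCoprime.prod_right fun i hi => (hq.2 i hi (ne_of_mem_of_not_mem hi has).symm).1
    rw [Finset.prod_insert has, ← sup_ker_aeval_eq_ker_aeval_mul_of_coprime T hcop, ih hq.1,
      Finset.iSup_insert]

lemma iSupIndep_ker_aeval_of_pairwise_isCoprime {ι : Type*} {q : ι → R[X]}
    (hq : Pairwise (IsCoprime on q)) :
    iSupIndep fun i => LinearMap.ker (aeval T (q i)) := by
  classical
  refine iSupIndep_iff_supIndep.2 fun s => Finset.supIndep_iff_disjoint_erase.2 fun i _ => ?_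
  have hcop : IsCoprime (q i) (∏ j ∈ s.erase i, q j) :=
    IsCoprime.prod_right fun j hj => hq (Finset.ne_of_mem_erase hj).symm
  refine (disjoint_ker_aeval_of_isCoprime T hcop).mono_right (Finset.sup_le fun j hj => ?_)
  exact ker_aeval_le_of_dvd T (Finset.dvd_prod_of_mem q hj)

end Polynomial

section DistinctRoots

variable {K U V ι : Type*} [Field K] [AddCommGroup U] [Module K U] [AddCommGroup V] [Module K V]

lemma pairwise_isCoprime_X_sub_C_pow {α : ι → K} (hα : Injective α) (k : ι → ℕ) :
    Pairwise (IsCoprime on fun i => (X - C (α i)) ^ k i) :=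
  fun _ _ hij => (pairwise_coprime_X_sub_C hα hij).pow

variable [Fintype ι] {T : Module.End K V} {α : ι → K} {k : ι → ℕ} {E : ι → ℕ → U →ₗ[K] V}

theorem mem_ker_aeval_prod_X_sub_C_pow_iff (hα : Injective α)
    (hE : ∀ i, IsJordanChain (aeval T (X - C (α i))) (E i)) {v : V} :
    v ∈ LinearMap.ker (aeval T (∏ i, (X - C (α i)) ^ k i)) ↔
      ∃ c : (i : ι) → Fin (k i) → U, v = ∑ i, ∑ j : Fin (k i), E i j (c i j) := by
  rw [ker_aeval_prod_of_pairwise_isCoprime T _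
      ((pairwise_isCoprime_X_sub_C_pow hα k).set_pairwise _),
    Submodule.mem_iSup_finset_iff_exists_sum]
  constructor
  · rintro ⟨w, rfl⟩
    choose c hc using fun i => (hE i).mem_ker_aeval_X_sub_C_pow_iff.1 (w i).2
    exact ⟨c, Finset.sum_congr rfl fun i _ => hc i⟩
  · rintro ⟨c, rfl⟩
    exact ⟨fun i => ⟨_, (hE i).mem_ker_aeval_X_sub_C_pow_iff.2 ⟨c i, rfl⟩⟩, rfl⟩

theorem injective_sum_sum_of_isJordanChain (hα : Injective α)
    (hE : ∀ i, IsJordanChain (aeval T (X - C (α i))) (E i)) :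
    Injective fun c : (i : ι) → Fin (k i) → U => ∑ i, ∑ j : Fin (k i), E i j (c i j) := by
  intro c c' hcc'
  have hmem (c : (i : ι) → Fin (k i) → U) (i : ι) :
      ∑ j : Fin (k i), E i j (c i j) ∈ LinearMap.ker (aeval T ((X - C (α i)) ^ k i)) :=
    (hE i).mem_ker_aeval_X_sub_C_pow_iff.2 ⟨c i, rfl⟩
  have hcomp := (iSupIndep_iff_finsetSum_eq_imp_eq _).1
    (iSupIndep_ker_aeval_of_pairwise_isCoprime T (pairwise_isCoprime_X_sub_C_pow hα k))
    Finset.univ _ _ (fun i _ => ⟨hmem c i, hmem c' i⟩) hcc'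
  funext i
  exact (hE i).sum_injective _ (hcomp i (Finset.mem_univ i))

end DistinctRoots

section Shift

variable (R M : Type*) [CommRing R] [AddCommGroup M] [Module R M]

def seqShift : Module.End R (ℤ → M) := LinearMap.funLeft R M (· - 1)

variable {R M}

lemma seqShift_apply (f : ℤ → M) (a : ℤ) : seqShift R M f a = f (a - 1) := rfl

lemma seqShift_pow_apply (n : ℕ) (f : ℤ → M) (a : ℤ) : (seqShift R M ^ n) f a = f (a - n) := by
  induction n generalizing a with
  | zero => simp
  | succ n ih =>
    rw [pow_succ', Module.End.mul_apply, seqShift_apply, ih]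
    congr 1
    push_cast
    ring

lemma aeval_seqShift_apply (p : R[X]) (f : ℤ → M) (a : ℤ) :
    aeval (seqShift R M) p f a = ∑ s ∈ Finset.range (p.natDegree + 1), p.coeff s • f (a - s) := by
  rw [aeval_eq_sum_range]
  simp only [LinearMap.sum_apply, Finset.sum_apply, LinearMap.smul_apply, Pi.smul_apply,
    seqShift_pow_apply]

lemma aeval_seqShift_X_sub_C_apply (μ : R) (f : ℤ → M) (a : ℤ) :
    aeval (seqShift R M) (X - C μ) f a = f (a - 1) - μ • f a := by
  simp [seqShift_apply, Module.algebraMap_end_apply]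

end Shift

section JordanSeq

variable {K M : Type*} [Field K] [AddCommGroup M] [Module K M]

def jordanSeq (α : K) (j : ℕ) (a : ℤ) : K := ((Ring.choose (-a - 1) j : ℤ) : K) * α ^ (-a - 1 - j)

def jordanMap (α : K) (j : ℕ) : M →ₗ[K] ℤ → M :=
  LinearMap.pi fun a => jordanSeq α j a • LinearMap.id

@[simp]
lemma jordanMap_apply (α : K) (j : ℕ) (u : M) (a : ℤ) : jordanMap α j u a = jordanSeq α j a • u :=
  rfl

lemma jordanSeq_zero (α : K) (a : ℤ) : jordanSeq α 0 a = α ^ (-a - 1) := by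
  simp [jordanSeq]

lemma jordanSeq_zero_sub_one {α : K} (hα : α ≠ 0) (a : ℤ) :
    jordanSeq α 0 (a - 1) = α * jordanSeq α 0 a := by
  rw [jordanSeq_zero, jordanSeq_zero, ← zpow_one_add₀ hα]
  ring_nf

lemma jordanSeq_succ_sub_one {α : K} (hα : α ≠ 0) (j : ℕ) (a : ℤ) :
    jordanSeq α (j + 1) (a - 1) - α * jordanSeq α (j + 1) a = jordanSeq α j a := by
  have hpascal : Ring.choose (-(a - 1) - 1) (j + 1) =
      Ring.choose (-a - 1) j + Ring.choose (-a - 1) (j + 1) := by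
    rw [← Ring.choose_succ_succ]
    ring_nf
  have hpow : α * α ^ (-a - 1 - ((j + 1 : ℕ) : ℤ)) = α ^ (-a - 1 - (j : ℤ)) := by
    rw [← zpow_one_add₀ hα]
    push_cast
    ring_nf
  simp only [jordanSeq, hpascal, Int.cast_add]
  rw [mul_left_comm, hpow, show -(a - 1) - 1 - ((j + 1 : ℕ) : ℤ) = -a - 1 - j by push_cast; ring]
  ring

lemma eq_jordanMap_zero_of_mem_ker {α : K} (hα : α ≠ 0) {f : ℤ → M}
    (hf : f ∈ LinearMap.ker (aeval (seqShift K M) (X - C α))) : f = jordanMap α 0 (f (-1)) := by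
  have hrec (a : ℤ) : f (a - 1) = α • f a := by
    have := congrFun (LinearMap.mem_ker.1 hf) a
    rwa [aeval_seqShift_X_sub_C_apply, Pi.zero_apply, sub_eq_zero] at this
  set g : ℤ → M := fun a => α ^ (a + 1) • f a
  have hg : Periodic g 1 := fun a => by
    simp only [g, show a + 1 + 1 = 1 + (a + 1) by ring]
    rw [zpow_one_add₀ hα, ← smul_smul, smul_comm α, ← hrec, add_sub_cancel_right]
  have hga (a : ℤ) : g a = f (-1) := by
    simpa [g] using (hg.int_mul_eq a).trans (hg.int_mul_eq (-1)).symm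
  funext a
  rw [jordanMap_apply, jordanSeq_zero, ← hga a, smul_smul, ← zpow_add₀ hα]
  simp

theorem isJordanChain_jordanMap {α : K} (hα : α ≠ 0) :
    IsJordanChain (aeval (seqShift K M) (X - C α)) (jordanMap α) where
  map_succ j u := by
    funext a
    rw [aeval_seqShift_X_sub_C_apply, jordanMap_apply, jordanMap_apply, jordanMap_apply, smul_smul,
      ← sub_smul, jordanSeq_succ_sub_one hα]
  ker_eq_range := by
    ext f
    refine ⟨fun hf => ⟨f (-1), (eq_jordanMap_zero_of_mem_ker hα hf).symm⟩, ?_⟩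
    rintro ⟨u, rfl⟩
    rw [LinearMap.mem_ker]
    funext a
    rw [aeval_seqShift_X_sub_C_apply, jordanMap_apply, jordanMap_apply, jordanSeq_zero_sub_one hα,
      mul_smul, sub_self, Pi.zero_apply]
  injective_zero u u' huu' := by
    simpa [jordanSeq_zero] using congrFun huu' (-1)

end JordanSeq

section FormalDelta

variable {U : Type*} [AddCommGroup U] [Module ℂ U]

lemma iterate_derX2_apply (j : ℕ) (F : ℤ → ℤ → ℂ) (a m : ℤ) :
    (derX2^[j] F) a m = (descPochhammer ℂ j).eval ((m + j : ℤ) : ℂ) * F a (m + j) := by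
  induction j generalizing m with
  | zero => simp
  | succ j ih =>
    rw [Function.iterate_succ_apply', derX2, ih, descPochhammer_succ_eval,
      show m + 1 + j = m + (j + 1 : ℕ) by push_cast; ring]
    push_cast
    ring

lemma descPochhammer_eval_intCast_eq_factorial_mul_choose {S : Type*} [Ring S] (j : ℕ) (r : ℤ) :
    (descPochhammer S j).eval (r : S) = j.factorial * ((Ring.choose r j : ℤ) : S) := by
  rw [← descPochhammer_eval_cast, eval_eq_smeval, Ring.descPochhammer_eq_factorial_smul_choose,
    nsmul_eq_mul]
  push_cast
  rfl

lemma smul_deltaTerm {α : ℂ} (hα : α ≠ 0) (j : ℕ) (B : ℤ → U) (a b : ℤ) :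
    (α ^ (-(j : ℤ)) / j.factorial) • deltaTerm α j B a b = jordanSeq α j a • B (a + b + j + 1) := by
  have hoff (m : ℤ) (hm : m ≠ a + b + j + 1) : (derX2^[j] (deltaTwo α)) a (b - m) • B m = 0 := by
    rw [iterate_derX2_apply, deltaTwo, if_neg (by omega), mul_zero, zero_smul]
  rw [deltaTerm, finsum_eq_single _ _ hoff, iterate_derX2_apply, deltaTwo, if_pos (by ring),
    smul_smul, show b - (a + b + j + 1) + j = -a - 1 by ring,
    descPochhammer_eval_intCast_eq_factorial_mul_choose, jordanSeq,
    show -a - 1 - (j : ℤ) = -a - 1 + -j by ring, zpow_add₀ hα]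
  have := j.factorial_ne_zero
  congr 1
  field_simp

def diagSlice (A : ℤ → ℤ → U) (n : ℤ) : ℤ → U := fun a => A a (n - a)

lemma polyLaurentAct_apply (p : ℂ[X]) (A : ℤ → ℤ → U) (a b : ℤ) :
    polyLaurentAct p A a b = aeval (seqShift ℂ U) p (diagSlice A (a + b)) a := by
  rw [aeval_seqShift_apply]
  refine Finset.sum_congr rfl fun s _ => ?_
  rw [diagSlice, show a + b - (a - s) = b + s by ring]

lemma polyLaurentAct_eq_zero_iff {p : ℂ[X]} {A : ℤ → ℤ → U} :
    polyLaurentAct p A = 0 ↔ ∀ n, diagSlice A n ∈ LinearMap.ker (aeval (seqShift ℂ U) p) := by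
  refine ⟨fun h n => ?_, fun h => ?_⟩
  · funext a
    simpa [polyLaurentAct_apply] using congrFun (congrFun h a) (n - a)
  · funext a b
    rw [polyLaurentAct_apply]
    exact congrFun (h (a + b)) a

lemma eq_sum_smul_deltaTerm_iff {ι : Type*} [Fintype ι] {α : ι → ℂ} (hα : ∀ i, α i ≠ 0)
    {k : ι → ℕ} (B : (i : ι) → Fin (k i) → ℤ → U) (A : ℤ → ℤ → U) :
    (A = fun a b => ∑ i, ∑ j : Fin (k i),
        ((α i) ^ (-((j : ℕ) : ℤ)) / (Nat.factorial (j : ℕ) : ℂ)) •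
          deltaTerm (α i) (j : ℕ) (B i j) a b) ↔
      ∀ n, diagSlice A n = ∑ i, ∑ j : Fin (k i), jordanMap (α i) j (B i j (n + j + 1)) := by
  simp_rw [smul_deltaTerm (hα _)]
  refine ⟨fun h n => ?_, fun h => ?_⟩
  · funext a
    simp [h, diagSlice, Finset.sum_apply]
  · funext a b
    simpa [diagSlice, Finset.sum_apply] using congrFun (h (a + b)) a

end FormalDelta

theorem stmt_7_general (U : Type*) [AddCommGroup U] [Module ℂ U]
    (A : ℤ → ℤ → U) (p : Polynomial ℂ) (r : ℕ)
    (α : Fin r → ℂ) (k : Fin r → ℕ) (c : ℂ)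
    (hc : c ≠ 0) (hinj : Function.Injective α) (hα : ∀ i, α i ≠ 0)
    (hp : p = Polynomial.C c * ∏ i, (Polynomial.X - Polynomial.C (α i)) ^ k i) :
    ((polyLaurentAct p A = fun _ _ => 0) ↔
      ∃ B : (i : Fin r) → Fin (k i) → ℤ → U,
        A = fun a b => ∑ i, ∑ j : Fin (k i),
          ((α i) ^ (-((j : ℕ) : ℤ)) / (Nat.factorial (j : ℕ) : ℂ)) •
            deltaTerm (α i) (j : ℕ) (B i j) a b) ∧
    (∀ B B' : (i : Fin r) → Fin (k i) → ℤ → U,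
      (A = fun a b => ∑ i, ∑ j : Fin (k i),
          ((α i) ^ (-((j : ℕ) : ℤ)) / (Nat.factorial (j : ℕ) : ℂ)) •
            deltaTerm (α i) (j : ℕ) (B i j) a b) →
      (A = fun a b => ∑ i, ∑ j : Fin (k i),
          ((α i) ^ (-((j : ℕ) : ℤ)) / (Nat.factorial (j : ℕ) : ℂ)) •
            deltaTerm (α i) (j : ℕ) (B' i j) a b) →
      B = B') := by
  have hchain (i : Fin r) :
      IsJordanChain (aeval (seqShift ℂ U) (X - C (α i))) (jordanMap (α i)) :=
    isJordanChain_jordanMap (hα i)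
  have hker (f : ℤ → U) : f ∈ LinearMap.ker (aeval (seqShift ℂ U) p) ↔
      ∃ b : (i : Fin r) → Fin (k i) → U, f = ∑ i, ∑ j : Fin (k i), jordanMap (α i) j (b i j) := by
    rw [hp, map_mul, aeval_C, ← Algebra.smul_def, LinearMap.ker_smul _ _ hc]
    exact mem_ker_aeval_prod_X_sub_C_pow_iff hinj hchain
  have hrepr (B : (i : Fin r) → Fin (k i) → ℤ → U) := eq_sum_smul_deltaTerm_iff hα B A
  refine ⟨⟨fun h => ?_, fun ⟨B, hB⟩ => ?_⟩, fun B B' hB hB' => ?_⟩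
  · choose b hb using fun n => (hker _).1 (polyLaurentAct_eq_zero_iff.1 h n)
    refine ⟨fun i j m => b (m - (j + 1)) i j, (hrepr _).2 fun n => ?_⟩
    simpa [add_assoc] using hb n
  · exact polyLaurentAct_eq_zero_iff.2 fun n => (hker _).2 ⟨_, (hrepr B).1 hB n⟩
  · funext i j m
    have := injective_sum_sum_of_isJordanChain hinj hchain
      (((hrepr B).1 hB (m - (j + 1))).symm.trans ((hrepr B').1 hB' (m - (j + 1))))
    simpa [add_assoc] using congrFun (congrFun this i) j

/-- let `p(x) = c ∏ᵢ (x − αᵢ)^{kᵢ}` be a nonzero polynomial with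
`p(0) ≠ 0` (the `αᵢ` are its distinct nonzero roots, with multiplicities
`kᵢ ≥ 1`), and let `A ∈ U[[x₁^{±1},x₂^{±1}]]`.  Then `p(x₁/x₂)A(x₁,x₂) = 0` iff
`A = Σᵢ Σ_{j<kᵢ} ((αᵢ^{−j}/j!)(∂/∂x₂)^j x₁⁻¹δ(αᵢx₂/x₁)) B_{i,j}(x₂)` for some
series `B_{i,j}`, and the `B_{i,j}` are uniquely determined by `A`. -/
theorem stmt_7 (U : Type*) [AddCommGroup U] [Module ℂ U]
    (A : ℤ → ℤ → U) (p : Polynomial ℂ) (r : ℕ)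
    (α : Fin r → ℂ) (k : Fin r → ℕ) (c : ℂ)
    (hc : c ≠ 0) (hinj : Function.Injective α) (hα : ∀ i, α i ≠ 0)
    (hk : ∀ i, 0 < k i)
    (hp : p = Polynomial.C c * ∏ i, (Polynomial.X - Polynomial.C (α i)) ^ k i) :
    ((polyLaurentAct p A = fun _ _ => 0) ↔
      ∃ B : (i : Fin r) → Fin (k i) → ℤ → U,
        A = fun a b => ∑ i, ∑ j : Fin (k i),
          ((α i) ^ (-((j : ℕ) : ℤ)) / (Nat.factorial (j : ℕ) : ℂ)) •
            deltaTerm (α i) (j : ℕ) (B i j) a b) ∧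
    (∀ B B' : (i : Fin r) → Fin (k i) → ℤ → U,
      (A = fun a b => ∑ i, ∑ j : Fin (k i),
          ((α i) ^ (-((j : ℕ) : ℤ)) / (Nat.factorial (j : ℕ) : ℂ)) •
            deltaTerm (α i) (j : ℕ) (B i j) a b) →
      (A = fun a b => ∑ i, ∑ j : Fin (k i),
          ((α i) ^ (-((j : ℕ) : ℤ)) / (Nat.factorial (j : ℕ) : ℂ)) •
            deltaTerm (α i) (j : ℕ) (B' i j) a b) →
      B = B') :=
  stmt_7_general U A p r α k c hc hinj hα hp
end

section
/- Let V be a vector space with Y: V → Hom(V, V((x))), 𝟏 ∈ V, 𝒟 ∈ End(V) satisfying 𝒟𝟏 = 0, Y(𝟏,x) = id, Y(v,x)𝟏 ∈ V[[x]] with lim_{x→0} Y(v,x)𝟏 = v, and [𝒟,Y(v,x)] = (d/dx)Y(v,x), and suppose for all u,v ∈ V there is a nonzero polynomial f(x₁,x₂) with f(x₁,x₂)Y(u,x₁)Y(v,x₂) = f(x₁,x₂)Y(v,x₂)Y(u,x₁). Then for all u,v ∈ V there is a nonnegative integer k such that (x₁−x₂)^k Y(u,x₁)Y(v,x₂) =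 (x₁−x₂)^k Y(v,x₂)Y(u,x₁), i.e., the usual weak commutativity (locality) holds. -/
/-!
Write `f = (x₁ - x₂)^k g` with `g(x, x) ≠ 0`. Applying `𝒟` to the relation
`f Y(u,x₁)Y(v,x₂)w = f Y(v,x₂)Y(u,x₁)w` and using the `𝒟`-bracket formula shows that the
relation persists when `f` is replaced by `(∂₁ + ∂₂) f`. This operator kills `(x₁ - x₂)^k` and acts
on `g(x, x)` as `d/dx`, so after `j` steps, where `x^j` occurs in `g(x, x)`, the factor next to
`(x₁ - x₂)^k` has nonzero constant term. Such a polynomial can be cancelled, because the supports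
of both products meet every lower quadrant in a finite set.
-/

/-- Multiplication of a two-variable formal series
`F ∈ V[[x₁^{±1},x₂^{±1}]]` (given by its coefficient function) by a polynomial
`f(x₁,x₂)`. -/
noncomputable def polyAct2 {V : Type*} [AddCommGroup V] [Module ℂ V]
    (f : MvPolynomial (Fin 2) ℂ) (F : ℤ → ℤ → V) : ℤ → ℤ → V :=
  fun a b => ∑ m ∈ f.support,
    MvPolynomial.coeff m f • F (a - (m 0 : ℤ)) (b - (m 1 : ℤ))

/-- Multiplication by `(x₁ − x₂)`. -/
noncomputable def locOp {V : Type*} [AddCommGroup V] (F : ℤ → ℤ → V) : ℤ → ℤ → V :=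
  fun a b => F (a - 1) b - F a (b - 1)

open MvPolynomial Filter

namespace QuasiLocal

section Polynomial

variable {K : Type*} [Field K]

/-- `f(x₁, x₂) ↦ f(x, x)`. -/
noncomputable def diag : MvPolynomial (Fin 2) K →ₐ[K] Polynomial K :=
  aeval ![Polynomial.X, Polynomial.X]

noncomputable def pderivSum : Derivation K (MvPolynomial (Fin 2) K) (MvPolynomial (Fin 2) K) :=
  pderiv 0 + pderiv 1

@[simp]
lemma diag_X (i : Fin 2) : diag (X i : MvPolynomial (Fin 2) K) = Polynomial.X := by
  fin_cases i <;> simp [diag]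

@[simp]
lemma pderivSum_X (i : Fin 2) : pderivSum (X i : MvPolynomial (Fin 2) K) = 1 := by
  fin_cases i <;> simp [pderivSum, pderiv_X]

@[simp]
lemma pderivSum_C (c : K) : pderivSum (C c : MvPolynomial (Fin 2) K) = 0 :=
  pderivSum.map_algebraMap c

lemma X_sub_X_dvd_of_diag_eq_zero {f : MvPolynomial (Fin 2) K} (hf : diag f = 0) :
    (X 0 - X 1 : MvPolynomial (Fin 2) K) ∣ f := by
  -- modulo `X 0 - X 1`, `f` agrees with `f(X 1, X 1)`, which is the image of `diag f`
  let I := Ideal.span {(X 0 - X 1 : MvPolynomial (Fin 2) K)}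
  have hmod : (Ideal.Quotient.mkₐ K I).comp (AlgHom.id K _)
      = (Ideal.Quotient.mkₐ K I).comp ((Polynomial.aeval (X 1)).comp diag) := by
    refine MvPolynomial.algHom_ext fun i => ?_
    fin_cases i
    · simp [Ideal.Quotient.mkₐ_eq_mk, Ideal.Quotient.eq, I]
    · simp
  have := congrArg (fun φ => φ f) hmod
  simpa [Ideal.Quotient.mkₐ_eq_mk, hf, I, Ideal.Quotient.eq_zero_iff_mem,
    Ideal.mem_span_singleton] using this

lemma exists_eq_X_sub_X_pow_mul {f : MvPolynomial (Fin 2) K} (hf : f ≠ 0) :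
    ∃ (k : ℕ) (g : MvPolynomial (Fin 2) K), f = (X 0 - X 1) ^ k * g ∧ diag g ≠ 0 := by
  have hunit : ¬IsUnit (X 0 - X 1 : MvPolynomial (Fin 2) K) := fun h => by
    simpa using h.map diag
  obtain ⟨k, g, hndvd, rfl⟩ := WfDvdMonoid.max_power_factor' hf hunit
  exact ⟨k, g, rfl, fun h => hndvd (X_sub_X_dvd_of_diag_eq_zero h)⟩

lemma diag_pderivSum (f : MvPolynomial (Fin 2) K) :
    diag (pderivSum f) = Polynomial.derivative (diag f) := by
  induction f using MvPolynomial.induction_on with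
  | C a => simp [diag, ← MvPolynomial.algebraMap_eq]
  | add p q hp hq => simp [hp, hq]
  | mul_X p i hp => simp [Derivation.leibniz, hp, mul_comm]

lemma constantCoeff_eq_coeff_zero_diag (f : MvPolynomial (Fin 2) K) :
    constantCoeff f = (diag f).coeff 0 := by
  induction f using MvPolynomial.induction_on with
  | C a => simp [diag, ← MvPolynomial.algebraMap_eq]
  | add p q hp hq => simp [hp, hq]
  | mul_X => simp

lemma exists_constantCoeff_iterate_pderivSum_ne_zero [CharZero K]
    {g : MvPolynomial (Fin 2) K} (hg : diag g ≠ 0) :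
    ∃ j : ℕ, constantCoeff (pderivSum^[j] g) ≠ 0 := by
  obtain ⟨j, hj⟩ := Polynomial.ext_iff.not.mp hg |> not_forall.mp
  refine ⟨j, ?_⟩
  have hdiag : ∀ n (f : MvPolynomial (Fin 2) K),
      diag (pderivSum^[n] f) = Polynomial.derivative^[n] (diag f) := by
    intro n
    induction n with
    | zero => simp
    | succ n ih => intro f; simp [Function.iterate_succ_apply', diag_pderivSum, ih]
  rw [constantCoeff_eq_coeff_zero_diag, hdiag, Polynomial.coeff_iterate_derivative, zero_add,
    Nat.descFactorial_self, nsmul_eq_mul]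
  exact mul_ne_zero (Nat.cast_ne_zero.mpr j.factorial_ne_zero) (by simpa using hj)

lemma iterate_pderivSum_X_sub_X_pow_mul (k j : ℕ) (g : MvPolynomial (Fin 2) K) :
    pderivSum^[j] ((X 0 - X 1) ^ k * g) = (X 0 - X 1) ^ k * pderivSum^[j] g := by
  have hpow : pderivSum ((X 0 - X 1 : MvPolynomial (Fin 2) K) ^ k) = 0 := by
    simp [Derivation.leibniz_pow]
  induction j with
  | zero => rfl
  | succ j ih => simp [Function.iterate_succ_apply', ih, Derivation.leibniz, hpow]

end Polynomial

section Action

variable {V : Type*} [AddCommGroup V] [Module ℂ V]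

lemma polyAct2_add (f g : MvPolynomial (Fin 2) ℂ) (F : ℤ → ℤ → V) :
    polyAct2 (f + g) F = polyAct2 f F + polyAct2 g F := by
  funext a b
  -- `polyAct2 f F a b` is the `Finsupp.sum` of `f` against the shifts of `F`
  exact Finsupp.sum_add_index' (h := fun (m : Fin 2 →₀ ℕ) (c : ℂ) => c • F (a - m 0) (b - m 1))
    (fun _ => zero_smul ℂ _) fun _ _ _ => add_smul _ _ _

lemma polyAct2_add_right (f : MvPolynomial (Fin 2) ℂ) (F G : ℤ → ℤ → V) :
    polyAct2 f (F + G) = polyAct2 f F + polyAct2 f G := by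
  funext a b
  simp [polyAct2, smul_add, Finset.sum_add_distrib]

lemma polyAct2_sub_right (f : MvPolynomial (Fin 2) ℂ) (F G : ℤ → ℤ → V) :
    polyAct2 f (F - G) = polyAct2 f F - polyAct2 f G := by
  funext a b
  simp [polyAct2, smul_sub, Finset.sum_sub_distrib]

lemma polyAct2_monomial (m : Fin 2 →₀ ℕ) (c : ℂ) (F : ℤ → ℤ → V) (a b : ℤ) :
    polyAct2 (monomial m c) F a b = c • F (a - m 0) (b - m 1) := by
  by_cases hc : c = 0
  · simp [hc, polyAct2]
  · simp [polyAct2, support_monomial, hc]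

lemma polyAct2_zero (F : ℤ → ℤ → V) : polyAct2 0 F = 0 := by
  funext a b
  simp [polyAct2]

lemma polyAct2_C (c : ℂ) (F : ℤ → ℤ → V) : polyAct2 (C c) F = c • F := by
  funext a b
  simp [← monomial_zero', polyAct2_monomial]

lemma polyAct2_mul (f g : MvPolynomial (Fin 2) ℂ) (F : ℤ → ℤ → V) :
    polyAct2 (f * g) F = polyAct2 f (polyAct2 g F) := by
  induction f using MvPolynomial.induction_on' with
  | add p q hp hq => rw [add_mul, polyAct2_add, polyAct2_add, hp, hq]
  | monomial m c =>
    induction g using MvPolynomial.induction_on' with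
    | add p q hp hq => rw [mul_add, polyAct2_add, polyAct2_add, polyAct2_add_right, hp, hq]
    | monomial n d =>
      funext a b
      simp only [monomial_mul, polyAct2_monomial, mul_smul, Finsupp.add_apply, Nat.cast_add,
        sub_sub]

lemma polyAct2_X_zero (F : ℤ → ℤ → V) (a b : ℤ) :
    polyAct2 (X 0 : MvPolynomial (Fin 2) ℂ) F a b = F (a - 1) b := by
  simp [X, polyAct2_monomial]

lemma polyAct2_X_one (F : ℤ → ℤ → V) (a b : ℤ) :
    polyAct2 (X 1 : MvPolynomial (Fin 2) ℂ) F a b = F a (b - 1) := by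
  simp [X, polyAct2_monomial]

lemma locOp_iterate (k : ℕ) (F : ℤ → ℤ → V) :
    locOp^[k] F = polyAct2 ((X 0 - X 1 : MvPolynomial (Fin 2) ℂ) ^ k) F := by
  induction k generalizing F with
  | zero => rw [Function.iterate_zero_apply, pow_zero, ← C_1, polyAct2_C, one_smul]
  | succ k ih =>
    have hloc : locOp F = polyAct2 (X 0 - X 1 : MvPolynomial (Fin 2) ℂ) F := by
      funext a b
      rw [sub_eq_add_neg, ← neg_one_smul ℂ (X 1), ← C_mul', polyAct2_add, polyAct2_mul, polyAct2_C]
      simp [locOp, polyAct2_X_zero, polyAct2_X_one, sub_eq_add_neg]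
    rw [Function.iterate_succ_apply, ih, hloc, ← polyAct2_mul, ← pow_succ]

lemma polyAct2_map (f : MvPolynomial (Fin 2) ℂ) (L : V →ₗ[ℂ] V) (F : ℤ → ℤ → V) :
    polyAct2 f (fun a b => L (F a b)) = fun a b => L (polyAct2 f F a b) := by
  funext a b
  simp [polyAct2, map_sum]

end Action

section Derivation

variable {V : Type*} [AddCommGroup V] [Module ℂ V]

/-- `∂/∂x₁ + ∂/∂x₂` on coefficient functions of series in `x₁, x₂`. -/
def seriesDerivSum (F : ℤ → ℤ → V) : ℤ → ℤ → V :=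
  fun a b => ((a : ℂ) + 1) • F (a + 1) b + ((b : ℂ) + 1) • F a (b + 1)

lemma seriesDerivSum_add (F G : ℤ → ℤ → V) :
    seriesDerivSum (F + G) = seriesDerivSum F + seriesDerivSum G := by
  funext a b
  simp only [seriesDerivSum, Pi.add_apply, smul_add]
  abel

lemma seriesDerivSum_smul (c : ℂ) (F : ℤ → ℤ → V) :
    seriesDerivSum (c • F) = c • seriesDerivSum F := by
  funext a b
  simp only [seriesDerivSum, Pi.smul_apply, smul_add, smul_comm c]

lemma seriesDerivSum_polyAct2_X (i : Fin 2) (F : ℤ → ℤ → V) :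
    seriesDerivSum (polyAct2 (X i) F) = F + polyAct2 (X i) (seriesDerivSum F) := by
  funext a b
  fin_cases i
  · simp only [seriesDerivSum, Pi.add_apply, Fin.zero_eta, polyAct2_X_zero, add_sub_cancel_right,
      sub_add_cancel, Int.cast_sub, Int.cast_one]
    module
  · simp only [seriesDerivSum, Pi.add_apply, Fin.mk_one, polyAct2_X_one, add_sub_cancel_right,
      sub_add_cancel, Int.cast_sub, Int.cast_one]
    module

lemma seriesDerivSum_polyAct2 (f : MvPolynomial (Fin 2) ℂ) (F : ℤ → ℤ → V) :
    seriesDerivSum (polyAct2 f F)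
      = polyAct2 (pderivSum f) F + polyAct2 f (seriesDerivSum F) := by
  induction f using MvPolynomial.induction_on generalizing F with
  | C c => rw [pderivSum_C, polyAct2_zero, polyAct2_C, polyAct2_C, seriesDerivSum_smul, zero_add]
  | add p q hp hq =>
    rw [polyAct2_add, seriesDerivSum_add, hp, hq, map_add, polyAct2_add, polyAct2_add]
    abel
  | mul_X p i hp =>
    rw [polyAct2_mul, hp, seriesDerivSum_polyAct2_X, Derivation.leibniz, pderivSum_X,
      smul_eq_mul, smul_eq_mul, mul_one, polyAct2_add, mul_comm, polyAct2_mul, polyAct2_mul,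
      polyAct2_add_right]
    abel

end Derivation

section LowerFinite

variable {V : Type*} [AddCommGroup V]

/-- Satisfied by the series in `V((x₁))((x₂))` and in `V((x₂))((x₁))`. -/
def LowerFinite (F : ℤ → ℤ → V) : Prop :=
  ∀ p : ℤ × ℤ, (Set.Iic p ∩ Function.support (Function.uncurry F)).Finite

lemma lowerFinite_of_eventually_atBot {F : ℤ → ℤ → V}
    (hcol : ∀ᶠ b in atBot, ∀ a, F a b = 0) (hrow : ∀ b, ∀ᶠ a in atBot, F a b = 0) :
    LowerFinite F := by
  rintro ⟨a₀, b₀⟩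
  obtain ⟨N, hN⟩ := eventually_atBot.mp hcol
  obtain ⟨P, hP⟩ := eventually_atBot.mp
    ((Set.finite_Icc N b₀).eventually_all.mpr fun b _ => hrow b)
  refine (Set.finite_Icc (P, N) (a₀, b₀)).subset ?_
  rintro ⟨a, b⟩ ⟨⟨ha₀, hb₀⟩, hne⟩
  have hb : N < b := lt_of_not_ge fun hb => hne (hN b hb a)
  have ha : P < a := lt_of_not_ge fun ha => hne (hP a ha b ⟨hb.le, hb₀⟩)
  exact ⟨⟨ha.le, hb.le⟩, ha₀, hb₀⟩

lemma LowerFinite.flip {F : ℤ → ℤ → V} (hF : LowerFinite F) : LowerFinite (flip F) := by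
  intro p
  refine ((hF p.swap).image Prod.swap).subset ?_
  rintro ⟨a, b⟩ ⟨⟨ha, hb⟩, hne⟩
  exact ⟨(b, a), ⟨⟨hb, ha⟩, hne⟩, rfl⟩

lemma LowerFinite.sub {F G : ℤ → ℤ → V} (hF : LowerFinite F) (hG : LowerFinite G) :
    LowerFinite (F - G) := fun p =>
  ((hF p).union (hG p)).subset fun _ ⟨hq, hne⟩ =>
    (Set.inter_union_distrib_left _ _ _).subset ⟨hq, Function.support_sub _ _ hne⟩

variable [Module ℂ V]

lemma LowerFinite.polyAct2 {F : ℤ → ℤ → V} (hF : LowerFinite F) (f : MvPolynomial (Fin 2) ℂ) :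
    LowerFinite (polyAct2 f F) := by
  intro p
  let s : (Fin 2 →₀ ℕ) → ℤ × ℤ := fun m => (m 0, m 1)
  refine (f.support.finite_toSet.biUnion fun m _ => (hF (p - s m)).image (· + s m)).subset ?_
  rintro ⟨a, b⟩ ⟨hp, hne⟩
  obtain ⟨m, hm, hm0⟩ := Finset.exists_ne_zero_of_sum_ne_zero hne
  refine Set.mem_biUnion hm ⟨(a - m 0, b - m 1), ⟨?_, right_ne_zero_of_smul hm0⟩, ?_⟩
  · exact sub_le_sub_right hp (s m)
  · simp [s]

lemma eq_zero_of_polyAct2_eq_zero {h : MvPolynomial (Fin 2) ℂ} (hh : constantCoeff h ≠ 0)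
    {F : ℤ → ℤ → V} (hF : LowerFinite F) (hhF : polyAct2 h F = 0) : F = 0 := by
  by_contra hne
  obtain ⟨a, b, hab⟩ : ∃ a b, F a b ≠ 0 := by
    by_contra! hzero
    exact hne (funext fun a => funext (hzero a))
  obtain ⟨⟨qa, qb⟩, hq, hmin⟩ := (hF (a, b)).toFinset.exists_min_image (fun q => q.1 + q.2)
    ⟨(a, b), by simpa using hab⟩
  -- at a lowest point of the support, the product with `h` only sees the constant term of `h`
  simp only [Set.Finite.mem_toFinset, Set.mem_inter_iff, Set.mem_Iic, Prod.forall,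
    Prod.mk_le_mk, Function.mem_support, Function.uncurry_apply_pair] at hq hmin
  have hlow : polyAct2 h F qa qb = constantCoeff h • F qa qb := by
    rw [polyAct2, Finset.sum_eq_single 0, constantCoeff_eq]
    · simp
    · intro m _ hm
      suffices F (qa - m 0) (qb - m 1) = 0 by rw [this, smul_zero]
      by_contra hne'
      have hle := hmin (qa - m 0) (qb - m 1) ⟨⟨by omega, by omega⟩, hne'⟩
      refine hm (Finsupp.ext fun i => ?_)
      fin_cases i <;> simp <;> omega
    · intro h0
      rw [notMem_support_iff.mp h0, zero_smul]
  exact smul_ne_zero hh hq.2 (by rw [← hlow, hhF]; rfl)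

lemma eq_of_polyAct2_eq {h : MvPolynomial (Fin 2) ℂ} (hh : constantCoeff h ≠ 0)
    {F G : ℤ → ℤ → V} (hF : LowerFinite F) (hG : LowerFinite G)
    (hFG : polyAct2 h F = polyAct2 h G) : F = G :=
  sub_eq_zero.mp <| eq_zero_of_polyAct2_eq_zero hh (hF.sub hG) <| by
    rw [polyAct2_sub_right, hFG, sub_self]

end LowerFinite

section VertexOperators

variable {V : Type*} [AddCommGroup V] [Module ℂ V]

lemma polyAct2_pderivSum_eq_of_forall_eq (D : Module.End ℂ V) {Φ Ψ : V → ℤ → ℤ → V}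
    (hΦ : ∀ w, (fun a b => D (Φ w a b)) = Φ (D w) + seriesDerivSum (Φ w))
    (hΨ : ∀ w, (fun a b => D (Ψ w a b)) = Ψ (D w) + seriesDerivSum (Ψ w))
    {f : MvPolynomial (Fin 2) ℂ} (hf : ∀ w, polyAct2 f (Φ w) = polyAct2 f (Ψ w)) (w : V) :
    polyAct2 (pderivSum f) (Φ w) = polyAct2 (pderivSum f) (Ψ w) := by
  have key : ∀ Θ : V → ℤ → ℤ → V,
      (∀ w, (fun a b => D (Θ w a b)) = Θ (D w) + seriesDerivSum (Θ w)) →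
      polyAct2 (pderivSum f) (Θ w) = seriesDerivSum (polyAct2 f (Θ w))
        + polyAct2 f (Θ (D w)) - fun a b => D (polyAct2 f (Θ w) a b) := by
    intro Θ hΘ
    rw [← polyAct2_map, hΘ, polyAct2_add_right, seriesDerivSum_polyAct2]
    abel
  rw [key Φ hΦ, key Ψ hΨ, hf, hf]

lemma polyAct2_iterate_pderivSum_eq_of_forall_eq (D : Module.End ℂ V) {Φ Ψ : V → ℤ → ℤ → V}
    (hΦ : ∀ w, (fun a b => D (Φ w a b)) = Φ (D w) + seriesDerivSum (Φ w))
    (hΨ : ∀ w, (fun a b => D (Ψ w a b)) = Ψ (D w) + seriesDerivSum (Ψ w))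
    {f : MvPolynomial (Fin 2) ℂ} (hf : ∀ w, polyAct2 f (Φ w) = polyAct2 f (Ψ w)) (j : ℕ) (w : V) :
    polyAct2 (pderivSum^[j] f) (Φ w) = polyAct2 (pderivSum^[j] f) (Ψ w) := by
  induction j generalizing w with
  | zero => exact hf w
  | succ j ih =>
    rw [Function.iterate_succ_apply']
    exact polyAct2_pderivSum_eq_of_forall_eq D hΦ hΨ ih w

/-- The coefficient of `x₁^a x₂^b` in `Y(u,x₁)Y(v,x₂)w`. -/
def prodSeries (Y : V →ₗ[ℂ] V →ₗ[ℂ] (ℤ → V)) (u v w : V) : ℤ → ℤ → V :=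
  fun a b => Y u (Y v w b) a

variable {Y : V →ₗ[ℂ] V →ₗ[ℂ] (ℤ → V)}

lemma lowerFinite_prodSeries (htrunc : ∀ v u : V, ∃ N : ℤ, ∀ n < N, Y v u n = 0) (u v w : V) :
    LowerFinite (prodSeries Y u v w) := by
  have hev : ∀ v u : V, ∀ᶠ n in atBot, Y v u n = 0 := fun v u => by
    obtain ⟨N, hN⟩ := htrunc v u
    exact eventually_atBot.mpr ⟨N - 1, fun n hn => hN n (by omega)⟩
  refine lowerFinite_of_eventually_atBot ?_ fun b => hev u (Y v w b)
  filter_upwards [hev v w] with b hb a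
  simp [prodSeries, hb]

lemma map_prodSeries_of_bracket {D : Module.End ℂ V}
    (hDb : ∀ (v u : V) (n : ℤ), D (Y v u n) - Y v (D u) n = ((n : ℂ) + 1) • Y v u (n + 1))
    (u v w : V) :
    (fun a b => D (prodSeries Y u v w a b))
      = prodSeries Y u v (D w) + seriesDerivSum (prodSeries Y u v w) := by
  have hDY : ∀ (v u : V) (n : ℤ), D (Y v u n) = Y v (D u) n + ((n : ℂ) + 1) • Y v u (n + 1) :=
    fun v u n => eq_add_of_sub_eq' (hDb v u n)
  funext a b
  simp only [prodSeries, seriesDerivSum, Pi.add_apply, hDY, map_add, map_smul, Pi.smul_apply]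
  abel

lemma map_flip_prodSeries_of_bracket {D : Module.End ℂ V}
    (hDb : ∀ (v u : V) (n : ℤ), D (Y v u n) - Y v (D u) n = ((n : ℂ) + 1) • Y v u (n + 1))
    (u v w : V) :
    (fun a b => D (flip (prodSeries Y v u w) a b))
      = flip (prodSeries Y v u (D w)) + seriesDerivSum (flip (prodSeries Y v u w)) := by
  funext a b
  have := congrFun (congrFun (map_prodSeries_of_bracket hDb v u w) b) a
  simp only [Pi.add_apply, seriesDerivSum, flip] at this ⊢
  rw [this]
  abel

end VertexOperators

end QuasiLocal

open QuasiLocal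

theorem stmt_10_general (V : Type*) [AddCommGroup V] [Module ℂ V]
    (Y : V →ₗ[ℂ] V →ₗ[ℂ] (ℤ → V)) (D : Module.End ℂ V)
    (htrunc : ∀ v u : V, ∃ N : ℤ, ∀ n < N, Y v u n = 0)
    (hDb : ∀ (v u : V) (n : ℤ),
      D (Y v u n) - Y v (D u) n = ((n : ℂ) + 1) • Y v u (n + 1))
    (hql : ∀ u v : V, ∃ f : MvPolynomial (Fin 2) ℂ, f ≠ 0 ∧
      ∀ w : V, polyAct2 f (fun a b => Y u (Y v w b) a)
        = polyAct2 f (fun a b => Y v (Y u w a) b)) :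
    ∀ u v : V, ∃ k : ℕ, ∀ w : V,
      locOp^[k] (fun a b => Y u (Y v w b) a)
        = locOp^[k] (fun a b => Y v (Y u w a) b) := by
  intro u v
  obtain ⟨f, hf0, hf⟩ := hql u v
  obtain ⟨k, g, rfl, hg⟩ := exists_eq_X_sub_X_pow_mul hf0
  obtain ⟨j, hj⟩ := exists_constantCoeff_iterate_pderivSum_ne_zero hg
  have hrel := polyAct2_iterate_pderivSum_eq_of_forall_eq D (map_prodSeries_of_bracket hDb u v)
    (map_flip_prodSeries_of_bracket hDb u v) hf j
  refine ⟨k, fun w => ?_⟩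
  rw [locOp_iterate, locOp_iterate]
  refine eq_of_polyAct2_eq hj ((lowerFinite_prodSeries htrunc u v w).polyAct2 _)
    ((lowerFinite_prodSeries htrunc v u w).flip.polyAct2 _) ?_
  rw [← polyAct2_mul, ← polyAct2_mul, mul_comm, ← iterate_pderivSum_X_sub_X_pow_mul]
  exact hrel w

/-- `V` with `Y`, `𝟏`, `𝒟` as in the quasi-vertex-algebra setting
(vacuum, creation, `𝒟`-bracket; `Y v u n` is the coefficient of `x^n` in
`Y(v,x)u`), such that any pair of vertex operators is quasi local: for all
`u, v` there is a nonzero polynomial `f(x₁,x₂)` with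
`f(x₁,x₂)Y(u,x₁)Y(v,x₂) = f(x₁,x₂)Y(v,x₂)Y(u,x₁)`.  Then ordinary locality
holds: for all `u, v` there is `k ∈ ℕ` with
`(x₁−x₂)^k Y(u,x₁)Y(v,x₂) = (x₁−x₂)^k Y(v,x₂)Y(u,x₁)`.
Here `Y(u,x₁)Y(v,x₂)w` has coefficient of `x₁^a x₂^b` equal to
`Y u (Y v w b) a`. -/
theorem stmt_10 (V : Type*) [AddCommGroup V] [Module ℂ V]
    (Y : V →ₗ[ℂ] V →ₗ[ℂ] (ℤ → V)) (vone : V) (D : Module.End ℂ V)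
    (htrunc : ∀ v u : V, ∃ N : ℤ, ∀ n < N, Y v u n = 0)
    (hD1 : D vone = 0)
    (hvac : ∀ (u : V) (n : ℤ), Y vone u n = if n = 0 then u else 0)
    (hcre : ∀ v : V, (∀ n < 0, Y v vone n = 0) ∧ Y v vone 0 = v)
    (hDb : ∀ (v u : V) (n : ℤ),
      D (Y v u n) - Y v (D u) n = ((n : ℂ) + 1) • Y v u (n + 1))
    (hql : ∀ u v : V, ∃ f : MvPolynomial (Fin 2) ℂ, f ≠ 0 ∧
      ∀ w : V, polyAct2 f (fun a b => Y u (Y v w b) a)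
        = polyAct2 f (fun a b => Y v (Y u w a) b)) :
    ∀ u v : V, ∃ k : ℕ, ∀ w : V,
      locOp^[k] (fun a b => Y u (Y v w b) a)
        = locOp^[k] (fun a b => Y v (Y u w a) b) :=
  stmt_10_general V Y D htrunc hDb hql
end

section
/- Define a bilinear multiplication on ℂ[t₀^{±1}, t₁^{±1}] by (t₀^n t₁^m)(t₀^s t₁^r) = δ_{n+m,r} t₀^{n+s} t₁^m, and a bilinear form by ⟨t₀^n t₁^m, t₀^s t₁^r⟩ = δ_{n+s,0} δ_{m+n,r}, for m,n,r,s ∈ ℤ. Then this multiplication is associative, and the bilinear form is symmetric and associative (i.e., ⟨xy, z⟩ = ⟨x, yz⟩ for all x, y, z). -/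
/-! Under `t₀^n t₁^m ↦ E_{m, m+n}` the product becomes multiplication of finitely supported
`ℤ × ℤ` matrices, and `⟨x, y⟩ = φ(xy)` with `φ` the trace. So associativity is a check on basis
elements, and the form is symmetric because `φ(xy) = φ(yx)` and invariant because the product is
associative. -/

/-- The multiplication on `ℂ[t₀^{±1},t₁^{±1}]` (modeled as finitely supported
functions on the basis `{t₀^n t₁^m}`, i.e. `(ℤ × ℤ) →₀ ℂ`) determined bilinearly
by `(t₀^n t₁^m)(t₀^s t₁^r) = δ_{n+m,r} t₀^{n+s} t₁^m`. -/
noncomputable def qtMul (x y : (ℤ × ℤ) →₀ ℂ) : (ℤ × ℤ) →₀ ℂ :=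
  x.sum fun p c => y.sum fun q d =>
    if p.1 + p.2 = q.2 then Finsupp.single (p.1 + q.1, p.2) (c * d) else 0

/-- The bilinear form determined by `⟨t₀^n t₁^m, t₀^s t₁^r⟩ = δ_{n+s,0}δ_{m+n,r}`. -/
noncomputable def qtForm (x y : (ℤ × ℤ) →₀ ℂ) : ℂ :=
  x.sum fun p c => y.sum fun q d =>
    if p.1 + q.1 = 0 ∧ p.2 + p.1 = q.2 then c * d else 0

open Finsupp

lemma qtMul_zero_left (y : (ℤ × ℤ) →₀ ℂ) : qtMul 0 y = 0 := by
  simp [qtMul]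

lemma qtMul_zero_right (x : (ℤ × ℤ) →₀ ℂ) : qtMul x 0 = 0 := by
  simp [qtMul]

lemma qtMul_add_left (x x' y : (ℤ × ℤ) →₀ ℂ) :
    qtMul (x + x') y = qtMul x y + qtMul x' y := by
  refine sum_add_index' (fun _ => by simp) fun p c c' => ?_
  rw [← sum_add]
  refine sum_congr fun q _ => ?_
  split_ifs <;> simp [add_mul]

lemma qtMul_add_right (x y y' : (ℤ × ℤ) →₀ ℂ) :
    qtMul x (y + y') = qtMul x y + qtMul x y' := by
  rw [qtMul, qtMul, qtMul, ← sum_add]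
  refine sum_congr fun p _ => sum_add_index' (fun _ => by simp) fun q d d' => ?_
  split_ifs <;> simp [mul_add]

lemma qtMul_single_single (p q : ℤ × ℤ) (c d : ℂ) :
    qtMul (single p c) (single q d) =
      if p.1 + p.2 = q.2 then single (p.1 + q.1, p.2) (c * d) else 0 := by
  simp [qtMul, sum_single_index]

lemma qtMul_single_assoc (p q r : ℤ × ℤ) (c d e : ℂ) :
    qtMul (qtMul (single p c) (single q d)) (single r e) =
      qtMul (single p c) (qtMul (single q d) (single r e)) := by
  by_cases hpq : p.1 + p.2 = q.2 <;> by_cases hqr : q.1 + q.2 = r.2 <;>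
    simp only [qtMul_single_single, hpq, hqr, if_true, if_false, qtMul_zero_left,
      qtMul_zero_right]
  · rw [if_pos (by omega), add_assoc, mul_assoc]
  · rw [if_neg (by omega)]

theorem qtMul_assoc (x y z : (ℤ × ℤ) →₀ ℂ) :
    qtMul (qtMul x y) z = qtMul x (qtMul y z) := by
  induction x using Finsupp.induction_linear with
  | zero => simp only [qtMul_zero_left]
  | add x x' hx hx' => simp only [qtMul_add_left, hx, hx']
  | single p c =>
  induction y using Finsupp.induction_linear with
  | zero => simp only [qtMul_zero_left, qtMul_zero_right]
  | add y y' hy hy' => simp only [qtMul_add_left, qtMul_add_right, hy, hy']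
  | single q d =>
  induction z using Finsupp.induction_linear with
  | zero => simp only [qtMul_zero_right]
  | add z z' hz hz' => simp only [qtMul_add_right, hz, hz']
  | single r e => exact qtMul_single_assoc p q r c d e

noncomputable def qtTrace : ((ℤ × ℤ) →₀ ℂ) →+ ℂ :=
  liftAddHom fun p => if p.1 = 0 then AddMonoidHom.id ℂ else 0

lemma qtTrace_single (p : ℤ × ℤ) (c : ℂ) : qtTrace (single p c) = if p.1 = 0 then c else 0 := by
  simp only [qtTrace, liftAddHom_apply_single]
  split_ifs <;> rfl

lemma qtForm_eq_qtTrace_qtMul (x y : (ℤ × ℤ) →₀ ℂ) : qtForm x y = qtTrace (qtMul x y) := by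
  simp only [qtForm, qtMul, map_finsuppSum]
  refine sum_congr fun p _ => sum_congr fun q _ => ?_
  rw [apply_ite qtTrace, qtTrace_single, map_zero, ← ite_and]
  exact if_congr (by omega) rfl rfl

lemma qtForm_single_single (p q : ℤ × ℤ) (c d : ℂ) :
    qtForm (single p c) (single q d) =
      if p.1 + q.1 = 0 ∧ p.2 + p.1 = q.2 then c * d else 0 := by
  simp [qtForm, sum_single_index]

lemma qtTrace_qtMul_comm (x y : (ℤ × ℤ) →₀ ℂ) : qtTrace (qtMul x y) = qtTrace (qtMul y x) := by
  induction x using Finsupp.induction_linear with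
  | zero => simp only [qtMul_zero_left, qtMul_zero_right]
  | add x x' hx hx' => simp only [qtMul_add_left, qtMul_add_right, map_add, hx, hx']
  | single p c =>
  induction y using Finsupp.induction_linear with
  | zero => simp only [qtMul_zero_left, qtMul_zero_right]
  | add y y' hy hy' => simp only [qtMul_add_left, qtMul_add_right, map_add, hy, hy']
  | single q d =>
  rw [← qtForm_eq_qtTrace_qtMul, ← qtForm_eq_qtTrace_qtMul, qtForm_single_single,
    qtForm_single_single, mul_comm]
  exact if_congr (by omega) rfl rfl

/-- the multiplication `(t₀^n t₁^m)(t₀^s t₁^r) = δ_{n+m,r} t₀^{n+s} t₁^m`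
is associative, and the bilinear form `⟨t₀^n t₁^m, t₀^s t₁^r⟩ = δ_{n+s,0}δ_{m+n,r}`
is symmetric and associative (invariant): `⟨xy, z⟩ = ⟨x, yz⟩`. -/
theorem stmt_17 :
    (∀ x y z : (ℤ × ℤ) →₀ ℂ, qtMul (qtMul x y) z = qtMul x (qtMul y z)) ∧
    (∀ x y : (ℤ × ℤ) →₀ ℂ, qtForm x y = qtForm y x) ∧
    (∀ x y z : (ℤ × ℤ) →₀ ℂ, qtForm (qtMul x y) z = qtForm x (qtMul y z)) := by
  refine ⟨qtMul_assoc, fun x y => ?_, fun x y z => ?_⟩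
  · rw [qtForm_eq_qtTrace_qtMul, qtForm_eq_qtTrace_qtMul, qtTrace_qtMul_comm]
  · rw [qtForm_eq_qtTrace_qtMul, qtForm_eq_qtTrace_qtMul, qtMul_assoc]
end
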